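/- Let H be a left Hopf R-algebroid with invertible antipode S, F an invertible counital 2-cocycle with V_F = (SF¹)F² invertible, and S_F(h) = V_F⁻¹(Sh)V_F. Then S_F satisfies the left antipode axiom for the twisted bialgebroid H_F: (S_F h_(1F))_(1F) h_(2F) ⊗_{R_F} (S_F h_(1F))_(2F) = 1 ⊗_{R_F} S_F h for all h ∈ H, where Δ_F(h) = F⁻¹Δ(h)F. -/
import Mathlib


open TensorProduct

noncomputable section Bialgebroid

variable (k R H : Type*) [CommRing k] [Ring R] [Ring H] [Algebra k R] [Algebra k H]

/-- Data of a left `R`-bialgebroid over `k`, with a chosen `k`-linear lift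
`Δ : H → H ⊗ₖ H` of the comultiplication `H → H ⊗_R H`. -/
structure BgdCore where
  /-- the source map -/
  α : R →ₐ[k] H
  /-- the target map (an algebra antihomomorphism) -/
  β : R →ₗ[k] H
  β_one : β 1 = 1
  β_mul : ∀ r s : R, β (r * s) = β s * β r
  αβ_comm : ∀ r s : R, α r * β s = β s * α r
  /-- lift of the comultiplication -/
  Δ : H →ₗ[k] H ⊗[k] H
  /-- the counit -/
  ε : H →ₗ[k] R

variable {k R H}

namespace BgdCore

/-- kernel of `H ⊗ₖ H ⊗ₖ H → H ⊗ H ⊗ H` over the base, for general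
source/target maps `a`, `b`. -/
def iR3g (a b : R → H) : Submodule k ((H ⊗[k] H) ⊗[k] H) :=
  Submodule.span k
    ({x | ∃ (r : R) (g g' g'' : H),
        x = ((b r * g) ⊗ₜ[k] g') ⊗ₜ[k] g'' - (g ⊗ₜ[k] (a r * g')) ⊗ₜ[k] g''} ∪
     {x | ∃ (r : R) (g g' g'' : H),
        x = (g ⊗ₜ[k] (b r * g')) ⊗ₜ[k] g'' - (g ⊗ₜ[k] g') ⊗ₜ[k] (a r * g'')})

variable (D : BgdCore k R H)

/-- `I_R`, the kernel of the projection `H ⊗ₖ H → H ⊗_R H`. -/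
def iR : Submodule k (H ⊗[k] H) :=
  Submodule.span k
    {x | ∃ (r : R) (g g' : H), x = (D.β r * g) ⊗ₜ[k] g' - g ⊗ₜ[k] (D.α r * g')}

/-- kernel of `H ⊗ₖ H ⊗ₖ H → H ⊗_R H ⊗_R H`. -/
def iR3 : Submodule k ((H ⊗[k] H) ⊗[k] H) :=
  iR3g (fun r => D.α r) (fun r => D.β r)

/-- `x ⊗ y ↦ α(ε x) * y`, realizing the left counit constraint. -/
def counitL : H ⊗[k] H →ₗ[k] H :=
  LinearMap.mul' k H ∘ₗ TensorProduct.map (D.α.toLinearMap ∘ₗ D.ε) LinearMap.id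

/-- `x ⊗ y ↦ β(ε y) * x`, realizing the right counit constraint. -/
def counitR : H ⊗[k] H →ₗ[k] H :=
  LinearMap.mul' k H ∘ₗ TensorProduct.map (D.β ∘ₗ D.ε) LinearMap.id
    ∘ₗ (TensorProduct.comm k H H).toLinearMap

end BgdCore

variable (k R H) in
/-- A left `R`-bialgebroid; identities involving `H ⊗_R H` are stated for the
chosen lifts modulo the ideal `I_R`. -/
structure LeftBialgebroid extends BgdCore k R H where
  εα : ∀ r : R, ε (α r) = r
  εβ : ∀ r : R, ε (β r) = r
  ε_lmul : ∀ (r : R) (h : H), ε (α r * h) = r * ε h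
  ε_rmul : ∀ (r : R) (h : H), ε (β r * h) = ε h * r
  ε_weakmul : ∀ g h : H, ε (g * h) = ε (g * α (ε h))
  counit_left : ∀ h : H, toBgdCore.counitL (Δ h) = h
  counit_right : ∀ h : H, toBgdCore.counitR (Δ h) = h
  Δ_one : Δ 1 - 1 ∈ toBgdCore.iR
  Δ_mul : ∀ g h : H, Δ (g * h) - Δ g * Δ h ∈ toBgdCore.iR
  Δ_bimod : ∀ (a b : R) (h : H),
    Δ (α a * (β b * h)) - (α a ⊗ₜ[k] β b) * Δ h ∈ toBgdCore.iR
  Δ_ideal : ∀ h : H, ∀ x ∈ toBgdCore.iR, Δ h * x ∈ toBgdCore.iR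
  coassoc : ∀ h : H,
    (TensorProduct.map Δ LinearMap.id) (Δ h)
      - (TensorProduct.assoc k H H H).symm ((TensorProduct.map LinearMap.id Δ) (Δ h))
      ∈ toBgdCore.iR3

/-- `x ⊗ y ↦ (Dl(T x) * C) * (y ⊗ 1)`; Sweedler: `(Tx)₍₁₎C¹y ⊗ (Tx)₍₂₎C²`. -/
def sandL (Dl : H →ₗ[k] H ⊗[k] H) (T : H →ₗ[k] H) (C : H ⊗[k] H) :
    H ⊗[k] H →ₗ[k] H ⊗[k] H :=
  LinearMap.mul' k (H ⊗[k] H) ∘ₗ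
    TensorProduct.map (LinearMap.mulRight k C ∘ₗ Dl ∘ₗ T) ((TensorProduct.mk k H H).flip 1)

/-- `x ⊗ y ↦ (Dl(T y) * C) * (1 ⊗ x)`. -/
def sandR (Dl : H →ₗ[k] H ⊗[k] H) (T : H →ₗ[k] H) (C : H ⊗[k] H) :
    H ⊗[k] H →ₗ[k] H ⊗[k] H :=
  LinearMap.mul' k (H ⊗[k] H) ∘ₗ
    TensorProduct.map (LinearMap.mulRight k C ∘ₗ Dl ∘ₗ T) (TensorProduct.mk k H H 1)
    ∘ₗ (TensorProduct.comm k H H).toLinearMap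

/-- `(x ⊗ y) ⊗ z ↦ Dl(T x) * (y ⊗ z)`, lift of the map `δ_S`. -/
def trimapL (Dl : H →ₗ[k] H ⊗[k] H) (T : H →ₗ[k] H) :
    (H ⊗[k] H) ⊗[k] H →ₗ[k] H ⊗[k] H :=
  LinearMap.mul' k (H ⊗[k] H) ∘ₗ TensorProduct.map (Dl ∘ₗ T) LinearMap.id
    ∘ₗ (TensorProduct.assoc k H H H).toLinearMap

/-- `(x ⊗ y) ⊗ z ↦ Dl(T z) * (x ⊗ y)`, lift of the map `δ_{S⁻¹}`. -/
def trimapR (Dl : H →ₗ[k] H ⊗[k] H) (T : H →ₗ[k] H) :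
    (H ⊗[k] H) ⊗[k] H →ₗ[k] H ⊗[k] H :=
  LinearMap.mul' k (H ⊗[k] H) ∘ₗ TensorProduct.map (Dl ∘ₗ T) LinearMap.id
    ∘ₗ (TensorProduct.comm k (H ⊗[k] H) H).toLinearMap

/-- `V`-element: for `F = F¹ ⊗ F²` this is `(T F¹) F²`. -/
def Vof (T : H →ₗ[k] H) (F : H ⊗[k] H) : H :=
  LinearMap.mul' k H ((TensorProduct.map T LinearMap.id) F)

/-- conjugated map `h ↦ a * (T h) * b`. -/
def SFmap (T : H →ₗ[k] H) (a b : H) : H →ₗ[k] H :=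
  LinearMap.mulLeft k a ∘ₗ LinearMap.mulRight k b ∘ₗ T

/-- A Böhm–Szlachányi invertible antipode for a left bialgebroid. -/
structure BSAntipode (B : LeftBialgebroid k R H) where
  /-- the antipode -/
  S : H →ₗ[k] H
  /-- its inverse -/
  Sinv : H →ₗ[k] H
  S_Sinv : ∀ h : H, S (Sinv h) = h
  Sinv_S : ∀ h : H, Sinv (S h) = h
  S_one : S 1 = 1
  S_antimul : ∀ g h : H, S (g * h) = S h * S g
  Sβ : ∀ r : R, S (B.toBgdCore.β r) = B.toBgdCore.α r
  Sinvα : ∀ r : R, Sinv (B.toBgdCore.α r) = B.toBgdCore.β r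
  left_axiom : ∀ h : H,
    sandL B.toBgdCore.Δ S 1 (B.toBgdCore.Δ h) - (1 : H) ⊗ₜ[k] S h ∈ B.toBgdCore.iR
  right_axiom : ∀ h : H,
    sandR B.toBgdCore.Δ Sinv 1 (B.toBgdCore.Δ h) - (Sinv h) ⊗ₜ[k] (1 : H) ∈ B.toBgdCore.iR

/-- A Drinfeld–Xu invertible counital 2-cocycle. -/
structure DXCocycle (B : LeftBialgebroid k R H) where
  /-- a lift of the 2-cocycle -/
  F : H ⊗[k] H
  /-- a lift of its inverse -/
  Fbar : H ⊗[k] H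
  counital_l : B.toBgdCore.counitL F = 1
  counital_r : B.toBgdCore.counitR F = 1
  cocycle :
    (TensorProduct.map B.toBgdCore.Δ LinearMap.id) F * (F ⊗ₜ[k] (1 : H))
      - (TensorProduct.assoc k H H H).symm ((TensorProduct.map LinearMap.id B.toBgdCore.Δ) F)
        * (TensorProduct.assoc k H H H).symm ((1 : H) ⊗ₜ[k] F) ∈ B.toBgdCore.iR3
  inv_right : F * Fbar - 1 ∈ B.toBgdCore.iR
  inv_left : Fbar * F - 1 ∈ Submodule.map (LinearMap.mulLeft k Fbar) B.toBgdCore.iR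

namespace DXCocycle

variable {B : LeftBialgebroid k R H} (C : DXCocycle B)

/-- twisted source `α_F(r) = α(F¹ ▷ r) F²`. -/
def alphaF (r : R) : H :=
  B.toBgdCore.counitL (C.F * (B.toBgdCore.α r ⊗ₜ[k] (1 : H)))

/-- twisted target `β_F(r) = β(F² ▷ r) F¹`. -/
def betaF (r : R) : H :=
  B.toBgdCore.counitR (C.F * ((1 : H) ⊗ₜ[k] B.toBgdCore.α r))

/-- `I_{R_F} = F⁻¹ I_R`, the kernel of `H ⊗ₖ H → H ⊗_{R_F} H`. -/
def iRF : Submodule k (H ⊗[k] H) :=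
  Submodule.map (LinearMap.mulLeft k C.Fbar) B.toBgdCore.iR

/-- lift of the twisted comultiplication `Δ_F(h) = F⁻¹ Δ(h) F`. -/
def ΔF : H →ₗ[k] H ⊗[k] H :=
  LinearMap.mulLeft k C.Fbar ∘ₗ LinearMap.mulRight k C.F ∘ₗ B.toBgdCore.Δ

/-- `α_F` as a linear map. -/
def alphaFlin : R →ₗ[k] H :=
  B.toBgdCore.counitL ∘ₗ LinearMap.mulLeft k C.F
    ∘ₗ (TensorProduct.mk k H H).flip 1 ∘ₗ B.toBgdCore.α.toLinearMap

/-- `β_F` as a linear map. -/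
def betaFlin : R →ₗ[k] H :=
  B.toBgdCore.counitR ∘ₗ LinearMap.mulLeft k C.F
    ∘ₗ TensorProduct.mk k H H 1 ∘ₗ B.toBgdCore.α.toLinearMap

/-- left counit constraint of the twisted bialgebroid. -/
def counitLF : H ⊗[k] H →ₗ[k] H :=
  LinearMap.mul' k H ∘ₗ TensorProduct.map (C.alphaFlin ∘ₗ B.toBgdCore.ε) LinearMap.id

/-- right counit constraint of the twisted bialgebroid. -/
def counitRF : H ⊗[k] H →ₗ[k] H :=
  LinearMap.mul' k H ∘ₗ TensorProduct.map (C.betaFlin ∘ₗ B.toBgdCore.ε) LinearMap.id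
    ∘ₗ (TensorProduct.comm k H H).toLinearMap

end DXCocycle

end Bialgebroid


section AuxSF

variable {k R H : Type*} [CommRing k] [Ring R] [Ring H] [Algebra k R] [Algebra k H]
variable (B : LeftBialgebroid k R H)

theorem sandL_tmul (Dl : H →ₗ[k] H ⊗[k] H) (T : H →ₗ[k] H) (Cc : H ⊗[k] H) (x y : H) :
    sandL Dl T Cc (x ⊗ₜ[k] y) = Dl (T x) * Cc * (y ⊗ₜ[k] (1 : H)) := by
  simp [sandL]

theorem trimapL_tmul (Dl : H →ₗ[k] H ⊗[k] H) (T : H →ₗ[k] H) (x y z : H) :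
    trimapL Dl T ((x ⊗ₜ[k] y) ⊗ₜ[k] z) = Dl (T x) * (y ⊗ₜ[k] z) := by
  simp [trimapL]

theorem mem_iR_gen (r : R) (g g' : H) :
    (B.toBgdCore.β r * g) ⊗ₜ[k] g' - g ⊗ₜ[k] (B.toBgdCore.α r * g') ∈ B.toBgdCore.iR :=
  Submodule.subset_span ⟨r, g, g', rfl⟩

theorem iR_mul_right {x : H ⊗[k] H} (hx : x ∈ B.toBgdCore.iR) (y : H ⊗[k] H) :
    x * y ∈ B.toBgdCore.iR := by
  induction y using TensorProduct.induction_on with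
  | zero => simpa using zero_mem _
  | tmul a b =>
      refine Submodule.span_induction (fun z hz => ?_) (by simpa using zero_mem _)
        (fun u v _ _ hu hv => by simpa [add_mul] using add_mem hu hv)
        (fun c u _ hu => by simpa [smul_mul_assoc] using Submodule.smul_mem _ c hu) hx
      obtain ⟨r, g, g', rfl⟩ := hz
      have : ((B.toBgdCore.β r * g) ⊗ₜ[k] g' - g ⊗ₜ[k] (B.toBgdCore.α r * g')) * (a ⊗ₜ[k] b)
          = (B.toBgdCore.β r * (g * a)) ⊗ₜ[k] (g' * b)
            - (g * a) ⊗ₜ[k] (B.toBgdCore.α r * (g' * b)) := by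
        simp [sub_mul, Algebra.TensorProduct.tmul_mul_tmul, mul_assoc]
      rw [this]
      exact mem_iR_gen B r (g * a) (g' * b)
  | add u v hu hv => simpa [mul_add] using add_mem hu hv

theorem iR_sub_mul {x y : H ⊗[k] H} (hxy : x - y ∈ B.toBgdCore.iR) (c : H ⊗[k] H) :
    x * c - y * c ∈ B.toBgdCore.iR := by
  simpa [sub_mul] using iR_mul_right B hxy c

theorem iR_Dmul {x y : H ⊗[k] H} (hxy : x - y ∈ B.toBgdCore.iR) (g : H) :
    B.toBgdCore.Δ g * x - B.toBgdCore.Δ g * y ∈ B.toBgdCore.iR := by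
  simpa [mul_sub] using B.Δ_ideal g _ hxy

theorem iR_trans {a b c : H ⊗[k] H} (h1 : a - b ∈ B.toBgdCore.iR)
    (h2 : b - c ∈ B.toBgdCore.iR) : a - c ∈ B.toBgdCore.iR := by
  simpa using add_mem h1 h2

theorem iR_symm {a b : H ⊗[k] H} (h1 : a - b ∈ B.toBgdCore.iR) :
    b - a ∈ B.toBgdCore.iR := by
  simpa [neg_sub] using neg_mem h1

theorem alpha_mulLeft_mem (a : R) {x : H ⊗[k] H} (hx : x ∈ B.toBgdCore.iR) :
    (B.toBgdCore.α a ⊗ₜ[k] (1 : H)) * x ∈ B.toBgdCore.iR := by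
  refine Submodule.span_induction (fun z hz => ?_) (by simpa using zero_mem _)
    (fun u v _ _ hu hv => by simpa [mul_add] using add_mem hu hv)
    (fun c u _ hu => by simpa [mul_smul_comm] using Submodule.smul_mem _ c hu) hx
  obtain ⟨r, g, g', rfl⟩ := hz
  have : (B.toBgdCore.α a ⊗ₜ[k] (1 : H))
        * ((B.toBgdCore.β r * g) ⊗ₜ[k] g' - g ⊗ₜ[k] (B.toBgdCore.α r * g'))
      = (B.toBgdCore.β r * (B.toBgdCore.α a * g)) ⊗ₜ[k] g'
        - (B.toBgdCore.α a * g) ⊗ₜ[k] (B.toBgdCore.α r * g') := by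
    simp only [mul_sub, Algebra.TensorProduct.tmul_mul_tmul, one_mul]
    rw [← mul_assoc, B.αβ_comm a r, mul_assoc]
  rw [this]
  exact mem_iR_gen B r _ g'

theorem D_alpha (r : R) :
    B.toBgdCore.Δ (B.toBgdCore.α r) - B.toBgdCore.α r ⊗ₜ[k] (1 : H) ∈ B.toBgdCore.iR := by
  have h1 := B.Δ_bimod r 1 1
  simp only [B.β_one, one_mul, mul_one] at h1
  have h2 : (B.toBgdCore.α r ⊗ₜ[k] (1 : H)) * (B.toBgdCore.Δ 1 - 1) ∈ B.toBgdCore.iR :=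
    alpha_mulLeft_mem B r B.Δ_one
  have h3 := add_mem h1 h2
  simpa [mul_sub] using h3

end AuxSF

section AuxSF2

variable {k R H : Type*} [CommRing k] [Ring R] [Ring H] [Algebra k R] [Algebra k H]
variable (B : LeftBialgebroid k R H) (A : BSAntipode B)

theorem DSbeta (r : R) (p : H) (w : H ⊗[k] H) :
    B.toBgdCore.Δ (A.S (B.toBgdCore.β r * p)) * w
      - B.toBgdCore.Δ (A.S p) * ((B.toBgdCore.α r ⊗ₜ[k] (1 : H)) * w) ∈ B.toBgdCore.iR := by
  have e1 : B.toBgdCore.Δ (A.S (B.toBgdCore.β r * p))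
      - B.toBgdCore.Δ (A.S p) * B.toBgdCore.Δ (B.toBgdCore.α r) ∈ B.toBgdCore.iR := by
    rw [A.S_antimul, A.Sβ]; exact B.Δ_mul _ _
  have e2 := iR_Dmul B (D_alpha B r) (A.S p)
  have e4 := iR_sub_mul B (iR_trans B e1 e2) w
  simpa [mul_assoc] using e4

theorem trimapL_iR3 {x : (H ⊗[k] H) ⊗[k] H} (hx : x ∈ B.toBgdCore.iR3) :
    trimapL B.toBgdCore.Δ A.S x ∈ B.toBgdCore.iR := by
  refine Submodule.span_induction (fun z hz => ?_) (by simpa using zero_mem _)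
    (fun u v _ _ hu hv => by simpa [map_add] using add_mem hu hv)
    (fun c u _ hu => by simpa [map_smul] using Submodule.smul_mem _ c hu) hx
  rcases hz with ⟨r, g, g', g'', rfl⟩ | ⟨r, g, g', g'', rfl⟩
  · rw [map_sub, trimapL_tmul, trimapL_tmul]
    have e := DSbeta B A r g (g' ⊗ₜ[k] g'')
    simp only [Algebra.TensorProduct.tmul_mul_tmul] at e
    simp only [one_mul, mul_one] at e ⊢
    exact e
  · rw [map_sub, trimapL_tmul, trimapL_tmul]
    exact iR_Dmul B (mem_iR_gen B r g' g'') (A.S g)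

theorem psi_iR {u : H ⊗[k] H} (hu : u ∈ B.toBgdCore.iR) :
    sandL B.toBgdCore.Δ A.S 1 u ∈ B.toBgdCore.iR := by
  refine Submodule.span_induction (fun z hz => ?_) (by simpa using zero_mem _)
    (fun u v _ _ hu hv => by simpa [map_add] using add_mem hu hv)
    (fun c u _ hu => by simpa [map_smul] using Submodule.smul_mem _ c hu) hu
  obtain ⟨r, g, g', rfl⟩ := hz
  rw [map_sub, sandL_tmul, sandL_tmul]
  have e := DSbeta B A r g (g' ⊗ₜ[k] (1 : H))
  simp only [Algebra.TensorProduct.tmul_mul_tmul] at e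
  simp only [one_mul, mul_one] at e ⊢
  exact e

theorem psi_quasi (x y : H) (u : H ⊗[k] H) :
    B.toBgdCore.Δ (A.S x) * sandL B.toBgdCore.Δ A.S 1 u * (y ⊗ₜ[k] (1 : H))
      - sandL B.toBgdCore.Δ A.S 1 (u * (x ⊗ₜ[k] y)) ∈ B.toBgdCore.iR := by
  induction u using TensorProduct.induction_on with
  | zero => simp
  | tmul p q =>
      have e1 : B.toBgdCore.Δ (A.S (p * x))
          - B.toBgdCore.Δ (A.S x) * B.toBgdCore.Δ (A.S p) ∈ B.toBgdCore.iR := by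
        rw [A.S_antimul]; exact B.Δ_mul _ _
      have e2 := iR_symm B (iR_sub_mul B e1 ((q * y) ⊗ₜ[k] (1 : H)))
      simp only [Algebra.TensorProduct.tmul_mul_tmul] at e2 ⊢
      simp only [sandL_tmul, mul_one, one_mul, mul_assoc] at e2 ⊢
      simp only [Algebra.TensorProduct.tmul_mul_tmul] at e2 ⊢
      simp only [mul_one, one_mul] at e2 ⊢
      exact e2
  | add u v hu hv =>
      simp only [map_add, mul_add, add_mul]
      convert add_mem hu hv using 1
      abel

theorem claimC (h : H) (v : H ⊗[k] H) :
    sandL B.toBgdCore.Δ A.S 1 (B.toBgdCore.Δ h * v)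
      - sandL B.toBgdCore.Δ A.S 1 v * ((1 : H) ⊗ₜ[k] A.S h) ∈ B.toBgdCore.iR := by
  induction v using TensorProduct.induction_on with
  | zero => simp
  | tmul p q =>
      have e1 := psi_quasi B A p q (B.toBgdCore.Δ h)
      have e3 := iR_sub_mul B (iR_Dmul B (A.left_axiom h) (A.S p)) (q ⊗ₜ[k] (1 : H))
      have e4 := iR_trans B (iR_symm B e1) e3
      simp only [sandL_tmul, mul_one, one_mul, mul_assoc] at e4 ⊢
      simp only [Algebra.TensorProduct.tmul_mul_tmul] at e4 ⊢
      simp only [mul_one, one_mul] at e4 ⊢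
      exact e4
  | add u v hu hv =>
      simp only [map_add, mul_add, add_mul]
      convert add_mem hu hv using 1
      abel

end AuxSF2

section AuxSF3

variable {k R H : Type*} [CommRing k] [Ring R] [Ring H] [Algebra k R] [Algebra k H]
variable (B : LeftBialgebroid k R H) (A : BSAntipode B) (C : DXCocycle B)

set_option synthInstance.maxHeartbeats 1000000
set_option maxHeartbeats 1000000

theorem Vof_tmul (T : H →ₗ[k] H) (p q : H) : Vof T (p ⊗ₜ[k] q) = T p * q := by
  simp [Vof]

theorem trimapL_pair (v : H ⊗[k] H) (q : H) :
    trimapL B.toBgdCore.Δ A.S (v ⊗ₜ[k] q)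
      = sandL B.toBgdCore.Δ A.S 1 v * ((1 : H) ⊗ₜ[k] q) := by
  induction v using TensorProduct.induction_on with
  | zero => simp
  | tmul x y =>
      simp only [trimapL_tmul, sandL_tmul, mul_one, mul_assoc]
      simp only [Algebra.TensorProduct.tmul_mul_tmul]
      simp only [mul_one, one_mul]
  | add u v hu hv => simp only [add_tmul, map_add, add_mul, hu, hv]

theorem claimX (w : H ⊗[k] H) :
    trimapL B.toBgdCore.Δ A.S
        ((TensorProduct.map B.toBgdCore.Δ LinearMap.id) w * (C.F ⊗ₜ[k] (1 : H)))
      - sandL B.toBgdCore.Δ A.S 1 C.F * ((1 : H) ⊗ₜ[k] Vof A.S w) ∈ B.toBgdCore.iR := by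
  induction w using TensorProduct.induction_on with
  | zero => simp [Vof]
  | tmul p q =>
      have e := iR_sub_mul B (claimC B A p C.F) ((1 : H) ⊗ₜ[k] q)
      simp only [TensorProduct.map_tmul, LinearMap.id_coe, id_eq, Vof_tmul]
      rw [show (B.toBgdCore.Δ p ⊗ₜ[k] q) * (C.F ⊗ₜ[k] (1 : H))
          = (B.toBgdCore.Δ p * C.F) ⊗ₜ[k] (q * 1) from
        Algebra.TensorProduct.tmul_mul_tmul _ _ _ _, mul_one, trimapL_pair]
      have e2 : sandL B.toBgdCore.Δ A.S 1 C.F * ((1 : H) ⊗ₜ[k] A.S p) * ((1 : H) ⊗ₜ[k] q)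
          = sandL B.toBgdCore.Δ A.S 1 C.F * ((1 : H) ⊗ₜ[k] (A.S p * q)) := by
        rw [mul_assoc]
        congr 1
        rw [Algebra.TensorProduct.tmul_mul_tmul, one_mul]
      rwa [e2] at e
  | add u v hu hv =>
      simp only [map_add, add_mul, mul_add, Vof, tmul_add]
      convert add_mem hu hv using 1
      abel

theorem triY_pair (p : H) (m G : H ⊗[k] H) :
    trimapL B.toBgdCore.Δ A.S
        ((TensorProduct.assoc k H H H).symm (p ⊗ₜ[k] m)
          * (TensorProduct.assoc k H H H).symm ((1 : H) ⊗ₜ[k] G))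
      = B.toBgdCore.Δ (A.S p) * (m * G) := by
  induction m using TensorProduct.induction_on with
  | zero => simp
  | tmul m1 m2 =>
      induction G using TensorProduct.induction_on with
      | zero => simp
      | tmul g1 g2 =>
          simp only [TensorProduct.assoc_symm_tmul]
          rw [show ((p ⊗ₜ[k] m1) ⊗ₜ[k] m2) * (((1 : H) ⊗ₜ[k] g1) ⊗ₜ[k] g2)
              = ((p ⊗ₜ[k] m1) * ((1 : H) ⊗ₜ[k] g1)) ⊗ₜ[k] (m2 * g2) from
            Algebra.TensorProduct.tmul_mul_tmul _ _ _ _]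
          rw [show (p ⊗ₜ[k] m1) * ((1 : H) ⊗ₜ[k] g1) = (p * 1) ⊗ₜ[k] (m1 * g1) from
            Algebra.TensorProduct.tmul_mul_tmul _ _ _ _, mul_one]
          rw [trimapL_tmul]
          rw [show (m1 ⊗ₜ[k] m2) * (g1 ⊗ₜ[k] g2) = (m1 * g1) ⊗ₜ[k] (m2 * g2) from
            Algebra.TensorProduct.tmul_mul_tmul _ _ _ _]
      | add u v hu hv => simp only [tmul_add, map_add, add_mul, mul_add, hu, hv]
  | add u v hu hv =>
      simp only [tmul_add, map_add, add_mul, mul_add, hu, hv]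

theorem claimY (w : H ⊗[k] H) :
    trimapL B.toBgdCore.Δ A.S
        ((TensorProduct.assoc k H H H).symm ((TensorProduct.map LinearMap.id B.toBgdCore.Δ) w)
          * (TensorProduct.assoc k H H H).symm ((1 : H) ⊗ₜ[k] C.F))
      - B.toBgdCore.Δ (Vof A.S w) * C.F ∈ B.toBgdCore.iR := by
  induction w using TensorProduct.induction_on with
  | zero => simp [Vof]
  | tmul p q =>
      simp only [TensorProduct.map_tmul, LinearMap.id_coe, id_eq, Vof_tmul, triY_pair]
      have e := iR_symm B (iR_sub_mul B (B.Δ_mul (A.S p) q) C.F)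
      simpa [mul_assoc] using e
  | add u v hu hv =>
      simp only [map_add, add_mul, mul_add, Vof, tmul_add]
      convert add_mem hu hv using 1
      abel

theorem K1 :
    B.toBgdCore.Δ (Vof A.S C.F) * C.F
      - sandL B.toBgdCore.Δ A.S 1 C.F * ((1 : H) ⊗ₜ[k] Vof A.S C.F) ∈ B.toBgdCore.iR := by
  have hc := trimapL_iR3 B A C.cocycle
  rw [map_sub] at hc
  exact iR_trans B (iR_trans B (iR_symm B (claimY B A C C.F)) (iR_symm B hc))
    (claimX B A C C.F)

end AuxSF3

section AuxSF4

variable {k R H : Type*} [CommRing k] [Ring R] [Ring H] [Algebra k R] [Algebra k H]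
variable (B : LeftBialgebroid k R H) (A : BSAntipode B) (C : DXCocycle B)

set_option synthInstance.maxHeartbeats 1000000
set_option maxHeartbeats 1000000

theorem SFmap_apply (T : H →ₗ[k] H) (a b x : H) : SFmap T a b x = a * (T x * b) := by
  simp [SFmap]

theorem claimA (Vinv : H) (u : H ⊗[k] H) :
    sandL B.toBgdCore.Δ (SFmap A.S Vinv (Vof A.S C.F)) C.F u
      - B.toBgdCore.Δ Vinv * (sandL B.toBgdCore.Δ A.S 1 (C.F * u)
          * ((1 : H) ⊗ₜ[k] Vof A.S C.F)) ∈ B.toBgdCore.iR := by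
  induction u using TensorProduct.induction_on with
  | zero => simp
  | tmul x y =>
      have e1 : B.toBgdCore.Δ (Vinv * (A.S x * Vof A.S C.F))
          - B.toBgdCore.Δ Vinv * B.toBgdCore.Δ (A.S x * Vof A.S C.F) ∈ B.toBgdCore.iR :=
        B.Δ_mul _ _
      have e2 := iR_Dmul B (B.Δ_mul (A.S x) (Vof A.S C.F)) Vinv
      have e4 := iR_sub_mul B (iR_sub_mul B (iR_trans B e1 e2) C.F) (y ⊗ₜ[k] (1 : H))
      have e5 := iR_sub_mul B (iR_Dmul B (iR_Dmul B (K1 B A C) (A.S x)) Vinv) (y ⊗ₜ[k] (1 : H))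
      have e7 := iR_Dmul B (iR_sub_mul B (psi_quasi B A x y C.F)
        ((1 : H) ⊗ₜ[k] Vof A.S C.F)) Vinv
      try simp only [mul_assoc] at e4 e5 e7 ⊢
      try simp only [Algebra.TensorProduct.tmul_mul_tmul] at e4 e5 e7 ⊢
      try simp only [mul_one, one_mul, sandL_tmul, SFmap_apply] at e4 e5 e7 ⊢
      try simp only [mul_assoc] at e4 e5 e7 ⊢
      try simp only [Algebra.TensorProduct.tmul_mul_tmul] at e4 e5 e7 ⊢
      try simp only [mul_one, one_mul] at e4 e5 e7 ⊢
      exact iR_trans B (iR_trans B e4 e5) e7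
  | add u v hu hv =>
      simp only [map_add, add_mul, mul_add]
      convert add_mem hu hv using 1
      abel

end AuxSF4

variable {k R H : Type*} [CommRing k] [Ring R] [Ring H] [Algebra k R] [Algebra k H]

set_option synthInstance.maxHeartbeats 1000000 in
set_option maxHeartbeats 1000000 in
/-- `S_F` satisfies the left antipode axiom for the twisted bialgebroid:
`(S_F h₍₁F₎)₍₁F₎ h₍₂F₎ ⊗_{R_F} (S_F h₍₁F₎)₍₂F₎ = 1 ⊗_{R_F} S_F h`. -/
theorem SF_left_antipode_axiom (B : LeftBialgebroid k R H) (A : BSAntipode B)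
    (C : DXCocycle B) (Vinv : H)
    (hV1 : Vof A.S C.F * Vinv = 1) (hV2 : Vinv * Vof A.S C.F = 1) (h : H) :
    sandL C.ΔF (SFmap A.S Vinv (Vof A.S C.F)) 1 (C.ΔF h)
      - (1 : H) ⊗ₜ[k] SFmap A.S Vinv (Vof A.S C.F) h ∈ C.iRF := by
  have hΔF : ∀ g : H, C.ΔF g = C.Fbar * (B.toBgdCore.Δ g * C.F) := fun g => rfl
  -- step 0 : peel off the left factor `F⁻¹`
  have e0 : ∀ u : H ⊗[k] H, sandL C.ΔF (SFmap A.S Vinv (Vof A.S C.F)) 1 u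
      = C.Fbar * sandL B.toBgdCore.Δ (SFmap A.S Vinv (Vof A.S C.F)) C.F u := by
    intro u
    induction u using TensorProduct.induction_on with
    | zero => simp
    | tmul x y =>
        rw [sandL_tmul, sandL_tmul, hΔF]
        simp only [mul_one, mul_assoc]
    | add u v hu hv => simp only [map_add, mul_add, hu, hv]
  -- the congruence chain modulo `I_R`
  have h1 := claimA B A C Vinv (C.ΔF h)
  have h2 : C.F * C.ΔF h - B.toBgdCore.Δ h * C.F ∈ B.toBgdCore.iR := by
    have e := iR_sub_mul B C.inv_right (B.toBgdCore.Δ h * C.F)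
    rw [hΔF]
    simp only [one_mul, mul_assoc] at e
    exact e
  have h3 : sandL B.toBgdCore.Δ A.S 1 (C.F * C.ΔF h)
      - sandL B.toBgdCore.Δ A.S 1 (B.toBgdCore.Δ h * C.F) ∈ B.toBgdCore.iR := by
    rw [← map_sub]; exact psi_iR B A h2
  have h5 := iR_trans B h3 (claimC B A h C.F)
  have h6 := iR_sub_mul B (iR_Dmul B h5 Vinv) ((1 : H) ⊗ₜ[k] Vof A.S C.F)
  -- claim D : Δ(V⁻¹) ψ(F) ≡ F (1 ⊗ V⁻¹)
  have b1 := B.Δ_mul Vinv (Vof A.S C.F)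
  rw [hV2] at b1
  have d2 := iR_sub_mul B (iR_trans B (iR_symm B b1) B.Δ_one) C.F
  have d3 := iR_Dmul B (K1 B A C) Vinv
  try simp only [mul_assoc] at d2 d3
  try simp only [Algebra.TensorProduct.tmul_mul_tmul] at d2 d3
  try simp only [mul_one, one_mul] at d2 d3
  have d5 := iR_sub_mul B (iR_trans B (iR_symm B d2) d3) ((1 : H) ⊗ₜ[k] Vinv)
  try simp only [mul_assoc] at d5
  try simp only [Algebra.TensorProduct.tmul_mul_tmul] at d5
  try simp only [mul_one, one_mul, hV1] at d5
  rw [← Algebra.TensorProduct.one_def] at d5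
  try simp only [mul_one] at d5
  have h7 := iR_symm B d5
  have h8 := iR_sub_mul B h7 ((1 : H) ⊗ₜ[k] (A.S h * Vof A.S C.F))
  have hZ : sandL B.toBgdCore.Δ (SFmap A.S Vinv (Vof A.S C.F)) C.F (C.ΔF h)
      - C.F * ((1 : H) ⊗ₜ[k] (Vinv * (A.S h * Vof A.S C.F))) ∈ B.toBgdCore.iR := by
    try simp only [mul_assoc] at h1 h6 h8 ⊢
    try simp only [Algebra.TensorProduct.tmul_mul_tmul] at h1 h6 h8 ⊢
    try simp only [mul_one, one_mul] at h1 h6 h8 ⊢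
    exact iR_trans B (iR_trans B h1 h6) h8
  -- final assembly
  obtain ⟨ι, hι, hιeq⟩ := C.inv_left
  have hιeq' : C.Fbar * ι = C.Fbar * C.F - 1 := hιeq
  have hmem : (sandL B.toBgdCore.Δ (SFmap A.S Vinv (Vof A.S C.F)) C.F (C.ΔF h)
        - C.F * ((1 : H) ⊗ₜ[k] (Vinv * (A.S h * Vof A.S C.F))))
      + ι * ((1 : H) ⊗ₜ[k] (Vinv * (A.S h * Vof A.S C.F))) ∈ B.toBgdCore.iR :=
    add_mem hZ (iR_mul_right B hι _)
  refine Submodule.mem_map.mpr ⟨_, hmem, ?_⟩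
  rw [LinearMap.mulLeft_apply, e0 (C.ΔF h), SFmap_apply]
  rw [mul_add, ← mul_assoc C.Fbar ι _, hιeq']
  noncomm_ring
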